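/- Overhead transitions of RKNL preserve the decoding: if a reachable configuration k steps to k' by any of the transitions (1), (2), (3), (5), (9), (10), or (11), then the decoded terms are equal: ⟦k⟧ = ⟦k'⟧. -/
import Mathlib


set_option autoImplicit false
set_option maxHeartbeats 1000000

namespace RKNL

/- Pure lambda terms over a type of variables. -/
inductive Tm (V : Type) : Type
  | var : V → Tm V
  | app : Tm V → Tm V → Tm V
  | lam : V → Tm V → Tm V
  deriving DecidableEq

abbrev Ident : Type := ℕ
abbrev Loc : Type := ℕ

/-- Lookup in an association list (first match). -/
def lookupL {β : Type} : List (ℕ × β) → ℕ → Option β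
  | [], _ => none
  | (a, b) :: l, x => if x = a then some b else lookupL l x

/-- Update of an association list. -/
def updL {β : Type} (l : List (ℕ × β)) (x : ℕ) (b : β) : List (ℕ × β) :=
  l.map fun p => if p.1 = x then (x, b) else p

/-- Environments map identifiers to store locations. -/
abbrev Env : Type := List (Ident × Loc)

/-- Closures pair a term with an environment. -/
abbrev Closure : Type := Tm Ident × Env

/-- Values: terms (normal forms), or abstraction closures annotated with a location. -/
inductive Value : Type
  | tm : Tm Ident → Value
  | abs : Ident → Tm Ident → Env → Loc → Value
  deriving DecidableEq

/-- Storable values (memothunks):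
`pend x t e` is the `todo ⊥` placeholder allocated for the abstraction `(λx.t, e)`,
`todo c` an unevaluated argument thunk, `done v` a memoized value. -/
inductive Storable : Type
  | pend : Ident → Tm Ident → Env → Storable
  | todo : Closure → Storable
  | done : Value → Storable
  deriving DecidableEq

/-- Stores map locations to storable values. -/
abbrev Store : Type := List (Loc × Storable)

/-- Stack frames: `arg c` is `(□ c)`, `appL t` is `(t □)`, `lamF x` is `λx.□`,
`cache ℓ` is `ℓ := □`. -/
inductive Frame : Type
  | arg : Closure → Frame
  | appL : Tm Ident → Frame
  | lamF : Ident → Frame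
  | cache : Loc → Frame
  deriving DecidableEq

abbrev Stack : Type := List Frame

/-- Machine configurations: evaluation mode `⟨c, s, σ⟩▸` and continue mode `⟨σ, v, s⟩◂`. -/
inductive Conf : Type
  | eval : Closure → Stack → Store → Conf
  | cont : Store → Value → Stack → Conf

/-- The initial configuration loading a term. -/
def Conf.init (t : Tm Ident) : Conf := .eval (t, []) [] []

def Conf.store : Conf → Store
  | .eval _ _ σ => σ
  | .cont σ _ _ => σ

def Conf.stack : Conf → Stack
  | .eval _ s _ => s
  | .cont _ _ s => s

/- Identifiers occurring in a configuration (used for freshness of generated names). -/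
def tmVars : Tm Ident → List Ident
  | .var x => [x]
  | .app a b => tmVars a ++ tmVars b
  | .lam x t => x :: tmVars t

def envVars (e : Env) : List Ident := e.map Prod.fst

def valVars : Value → List Ident
  | .tm t => tmVars t
  | .abs x t e _ => x :: (tmVars t ++ envVars e)

def storableVars : Storable → List Ident
  | .pend x t e => x :: (tmVars t ++ envVars e)
  | .todo c => tmVars c.1 ++ envVars c.2
  | .done v => valVars v

def frameVars : Frame → List Ident
  | .arg c => tmVars c.1 ++ envVars c.2
  | .appL t => tmVars t
  | .lamF x => [x]
  | .cache _ => []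

def stackVars (s : Stack) : List Ident := s.foldr (fun f acc => frameVars f ++ acc) []

def storeVars (σ : Store) : List Ident := σ.foldr (fun p acc => storableVars p.2 ++ acc) []

def confVars : Conf → List Ident
  | .eval c s σ => tmVars c.1 ++ envVars c.2 ++ stackVars s ++ storeVars σ
  | .cont σ v s => valVars v ++ stackVars s ++ storeVars σ

/-- The top of the stack is not an argument frame. -/
def Stack.noArgTop : Stack → Prop
  | Frame.arg _ :: _ => False
  | _ => True

/-- The top of the stack is not a memoization frame. -/
def Stack.noCacheTop : Stack → Prop
  | Frame.cache _ :: _ => False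
  | _ => True

/-- The eleven transitions of the RKNL abstract machine, indexed by rule number. -/
inductive Step : ℕ → Conf → Conf → Prop
  | r1 {t1 t2 : Tm Ident} {e : Env} {s : Stack} {σ : Store} :
      Step 1 (.eval (.app t1 t2, e) s σ) (.eval (t1, e) (.arg (t2, e) :: s) σ)
  | r2 {x : Ident} {t : Tm Ident} {e : Env} {s : Stack} {σ : Store} {ℓ : Loc}
      (h : lookupL σ ℓ = none) :
      Step 2 (.eval (.lam x t, e) s σ) (.cont ((ℓ, .pend x t e) :: σ) (.abs x t e ℓ) s)
  | r3 {x : Ident} {e e2 : Env} {s : Stack} {σ : Store} {ℓ : Loc} {t : Tm Ident}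
      (he : lookupL e x = some ℓ) (hσ : lookupL σ ℓ = some (.todo (t, e2))) :
      Step 3 (.eval (.var x, e) s σ) (.eval (t, e2) (.cache ℓ :: s) σ)
  | r4done {x : Ident} {e : Env} {s : Stack} {σ : Store} {ℓ : Loc} {v : Value}
      (he : lookupL e x = some ℓ) (hσ : lookupL σ ℓ = some (.done v)) :
      Step 4 (.eval (.var x, e) s σ) (.cont σ v s)
  | r4free {x : Ident} {e : Env} {s : Stack} {σ : Store}
      (he : lookupL e x = none) :
      Step 4 (.eval (.var x, e) s σ) (.cont σ (.tm (.var x)) s)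
  | r5 {σ : Store} {v : Value} {ℓ : Loc} {s : Stack} :
      Step 5 (.cont σ v (.cache ℓ :: s)) (.cont (updL σ ℓ (.done v)) v s)
  | r6 {σ : Store} {x : Ident} {t t2 : Tm Ident} {e e2 : Env} {ℓ ℓ2 : Loc} {s : Stack}
      (h : lookupL σ ℓ2 = none) :
      Step 6 (.cont σ (.abs x t e ℓ) (.arg (t2, e2) :: s))
             (.eval (t, (x, ℓ2) :: e) s ((ℓ2, .todo (t2, e2)) :: σ))
  | r7 {σ : Store} {x x' x0 : Ident} {t t0 : Tm Ident} {e e0 : Env} {ℓ ℓ2 : Loc} {s : Stack}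
      (hσ : lookupL σ ℓ = some (.pend x0 t0 e0))
      (hs1 : Stack.noArgTop s) (hs2 : Stack.noCacheTop s)
      (hℓ2 : lookupL σ ℓ2 = none)
      (hx' : x' ∉ confVars (.cont σ (.abs x t e ℓ) s)) :
      Step 7 (.cont σ (.abs x t e ℓ) s)
             (.eval (t, (x, ℓ2) :: e) (.lamF x' :: .cache ℓ :: s)
                    ((ℓ2, .done (.tm (.var x'))) :: σ))
  | r8 {σ : Store} {x : Ident} {t : Tm Ident} {e : Env} {ℓ : Loc} {s : Stack} {v : Value}
      (hσ : lookupL σ ℓ = some (.done v))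
      (hs1 : Stack.noArgTop s) (hs2 : Stack.noCacheTop s) :
      Step 8 (.cont σ (.abs x t e ℓ) s) (.cont σ v s)
  | r9 {σ : Store} {t t2 : Tm Ident} {e2 : Env} {s : Stack} :
      Step 9 (.cont σ (.tm t) (.arg (t2, e2) :: s)) (.eval (t2, e2) (.appL t :: s) σ)
  | r10 {σ : Store} {t1 t2 : Tm Ident} {s : Stack} :
      Step 10 (.cont σ (.tm t2) (.appL t1 :: s)) (.cont σ (.tm (.app t1 t2)) s)
  | r11 {σ : Store} {t : Tm Ident} {x : Ident} {s : Stack} :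
      Step 11 (.cont σ (.tm t) (.lamF x :: s)) (.cont σ (.tm (.lam x t)) s)

/-- Reachability by machine transitions. -/
inductive Reach (k0 : Conf) : Conf → Prop
  | refl : Reach k0 k0
  | step {k k' : Conf} {r : ℕ} : Reach k0 k → Step r k k' → Reach k0 k'

/- Generic syntax material used by the decoding: variable renaming of terms,
one-hole contexts, neutral/normal terms, normal-order contexts,
capture-avoiding substitution, normal-order reduction and α-equivalence. -/

def Tm.mapVar {V V' : Type} (f : V → V') : Tm V → Tm V'
  | .var x => .var (f x)
  | .app a b => .app (Tm.mapVar f a) (Tm.mapVar f b)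
  | .lam x t => .lam (f x) (Tm.mapVar f t)

/-- Variables of decoded terms: `Sum.inl x` is an ordinary identifier
(free variables and generated fresh names), `Sum.inr x` is the overlined
(marked) copy `x̄`, taken from a disjoint copy of the set of identifiers. -/
abbrev W : Type := Ident ⊕ Ident

/-- Embedding of machine terms into decoded terms. -/
def emb (t : Tm Ident) : Tm W := Tm.mapVar Sum.inl t

/-- One-hole contexts. -/
inductive Ctx (V : Type) : Type
  | hole : Ctx V
  | appL : Ctx V → Tm V → Ctx V
  | appR : Tm V → Ctx V → Ctx V
  | lam : V → Ctx V → Ctx V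

def Ctx.plug {V : Type} : Ctx V → Tm V → Tm V
  | .hole, t => t
  | .appL C u, t => .app (Ctx.plug C t) u
  | .appR u C, t => .app u (Ctx.plug C t)
  | .lam x C, t => .lam x (Ctx.plug C t)

def Ctx.comp {V : Type} : Ctx V → Ctx V → Ctx V
  | .hole, D => D
  | .appL C u, D => .appL (Ctx.comp C D) u
  | .appR u C, D => .appR u (Ctx.comp C D)
  | .lam x C, D => .lam x (Ctx.comp C D)

mutual
  inductive Neutral {V : Type} : Tm V → Prop
    | var (x : V) : Neutral (.var x)
    | app {a n : Tm V} : Neutral a → NormalTm n → Neutral (.app a n)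
  inductive NormalTm {V : Type} : Tm V → Prop
    | lam {x : V} {t : Tm V} : NormalTm t → NormalTm (.lam x t)
    | neu {a : Tm V} : Neutral a → NormalTm a
end

mutual
  inductive NOCtx {V : Type} : Ctx V → Prop
    | bar {C : Ctx V} : NOBar C → NOCtx C
    | lam {x : V} {C : Ctx V} : NOCtx C → NOCtx (.lam x C)
  inductive NOBar {V : Type} : Ctx V → Prop
    | hole : NOBar .hole
    | appL {C : Ctx V} {t : Tm V} : NOBar C → NOBar (.appL C t)
    | appR {a : Tm V} {C : Ctx V} : Neutral a → NOCtx C → NOBar (.appR a C)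
end

/-- `x` occurs free in a term. -/
inductive FreeIn {V : Type} (x : V) : Tm V → Prop
  | var : FreeIn x (.var x)
  | appL {a b : Tm V} : FreeIn x a → FreeIn x (.app a b)
  | appR {a b : Tm V} : FreeIn x b → FreeIn x (.app a b)
  | lam {y : V} {t : Tm V} : x ≠ y → FreeIn x t → FreeIn x (.lam y t)

/-- Capture-avoiding substitution `t{x := u}` (as a relation, allowing
α-renaming of binders that would capture variables of `u`). -/
inductive SubstRel {V : Type} : V → Tm V → Tm V → Tm V → Prop
  | var_eq {x : V} {u : Tm V} : SubstRel x u (.var x) u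
  | var_ne {x y : V} {u : Tm V} : y ≠ x → SubstRel x u (.var y) (.var y)
  | app {x : V} {u a a' b b' : Tm V} : SubstRel x u a a' → SubstRel x u b b' →
      SubstRel x u (.app a b) (.app a' b')
  | lam_same {x : V} {u t : Tm V} : SubstRel x u (.lam x t) (.lam x t)
  | lam {x y : V} {u t t' : Tm V} : y ≠ x → ¬ FreeIn y u → SubstRel x u t t' →
      SubstRel x u (.lam y t) (.lam y t')
  | lam_rename {x y z : V} {u t t0 t' : Tm V} : y ≠ x → FreeIn y u →
      z ≠ x → ¬ FreeIn z u → ¬ FreeIn z t →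
      SubstRel y (.var z) t t0 → SubstRel x u t0 t' →
      SubstRel x u (.lam y t) (.lam z t')

/-- One step of normal-order reduction: β-contraction in a normal-order context. -/
inductive NOStep {V : Type} : Tm V → Tm V → Prop
  | mk {N : Ctx V} {x : V} {b u r : Tm V} :
      NOCtx N → SubstRel x u b r →
      NOStep (N.plug (.app (.lam x b) u)) (N.plug r)

/-- Correspondence of variables under a list of bound-variable renamings. -/
inductive AVar {V : Type} : List (V × V) → V → V → Prop
  | nil {x : V} : AVar [] x x
  | here {x y : V} {ρ : List (V × V)} : AVar ((x, y) :: ρ) x y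
  | there {x y a b : V} {ρ : List (V × V)} :
      x ≠ a → y ≠ b → AVar ρ x y → AVar ((a, b) :: ρ) x y

/-- α-equivalence up to a list of bound-variable renamings. -/
inductive Alpha {V : Type} : List (V × V) → Tm V → Tm V → Prop
  | var {ρ : List (V × V)} {x y : V} : AVar ρ x y → Alpha ρ (.var x) (.var y)
  | app {ρ : List (V × V)} {a a' b b' : Tm V} :
      Alpha ρ a a' → Alpha ρ b b' → Alpha ρ (.app a b) (.app a' b')
  | lam {ρ : List (V × V)} {x y : V} {t t' : Tm V} :
      Alpha ((x, y) :: ρ) t t' → Alpha ρ (.lam x t) (.lam y t')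

/-- α-equivalence: equality up to renaming of bound variables. -/
def AlphaEq {V : Type} (t t' : Tm V) : Prop := Alpha [] t t'

/-- Subterm relation. -/
inductive Subtm {V : Type} : Tm V → Tm V → Prop
  | refl (t : Tm V) : Subtm t t
  | appL {s a b : Tm V} : Subtm s a → Subtm s (.app a b)
  | appR {s a b : Tm V} : Subtm s b → Subtm s (.app a b)
  | lam {s t : Tm V} {x : V} : Subtm s t → Subtm s (.lam x t)

def IsRedex {V : Type} (t : Tm V) : Prop := ∃ (x : V) (b u : Tm V), t = .app (.lam x b) u

/-- β-normal form: no subterm is a β-redex. -/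
def BetaNormal {V : Type} (t : Tm V) : Prop := ∀ s : Tm V, Subtm s t → ¬ IsRedex s

/- The history-dependent decoding of RKNL configurations. -/

/-- `HistFrom k0 H k` : `H` is the full sequence of configurations (oldest
first) of an execution from `k0` to `k`. -/
inductive HistFrom (k0 : Conf) : List Conf → Conf → Prop
  | refl : HistFrom k0 [k0] k0
  | step {H : List Conf} {k k' : Conf} {r : ℕ} :
      HistFrom k0 H k → Step r k k' → HistFrom k0 (H ++ [k']) k'

/-- `initOf H ℓ = some (H', sv)` : in the history `H`, location `ℓ` was
initialized with the storable value `sv`, and `H'` is the prefix of the history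
up to (and including) the configuration where `ℓ` was initialized. -/
def initOf : List Conf → Loc → Option (List Conf × Storable)
  | [], _ => none
  | k :: H, ℓ =>
    match lookupL (Conf.store k) ℓ with
    | some sv => some ([k], sv)
    | none => Option.map (fun p => (k :: p.1, p.2)) (initOf H ℓ)

/-- Decoding environments: an identifier is mapped either to a store location
(`Sum.inl ℓ`) or to an overlined variable `ȳ` (`Sum.inr y`) introduced when
decoding an abstraction. -/
abbrev DEnv : Type := List (Ident × (Loc ⊕ Ident))

def embEnv (e : Env) : DEnv := e.map fun p => (p.1, Sum.inl p.2)

/-- Decoding of closures relative to an execution history: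
`DecC H t e d` means the closure with term `t` and decoding environment `e`
decodes to the term `d` relative to the history `H`. A variable bound to a
location initialized (by rule 6) with an argument thunk decodes to the decoding
of that thunk at the time of initialization; a variable bound to a location
initialized (by rule 7) with a fresh variable decodes to that variable; an
unbound variable decodes to itself. -/
inductive DecC : List Conf → Tm Ident → DEnv → Tm W → Prop
  | app {H : List Conf} {t1 t2 : Tm Ident} {e : DEnv} {d1 d2 : Tm W} :
      DecC H t1 e d1 → DecC H t2 e d2 → DecC H (.app t1 t2) e (.app d1 d2)
  | lam {H : List Conf} {x : Ident} {t : Tm Ident} {e : DEnv} {d : Tm W} :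
      DecC H t ((x, Sum.inr x) :: e) d → DecC H (.lam x t) e (.lam (Sum.inr x) d)
  | var_bar {H : List Conf} {x y : Ident} {e : DEnv} :
      lookupL e x = some (Sum.inr y) → DecC H (.var x) e (.var (Sum.inr y))
  | var_arg {H H' : List Conf} {x : Ident} {e : DEnv} {ℓ : Loc}
      {t2 : Tm Ident} {e2 : Env} {d : Tm W} :
      lookupL e x = some (Sum.inl ℓ) →
      initOf H ℓ = some (H', .todo (t2, e2)) →
      DecC H' t2 (embEnv e2) d →
      DecC H (.var x) e d
  | var_fresh {H H' : List Conf} {x x' : Ident} {e : DEnv} {ℓ : Loc} :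
      lookupL e x = some (Sum.inl ℓ) →
      initOf H ℓ = some (H', .done (.tm (.var x'))) →
      DecC H (.var x) e (.var (Sum.inl x'))
  | var_free {H : List Conf} {x : Ident} {e : DEnv} :
      lookupL e x = none → DecC H (.var x) e (.var (Sum.inl x))

/-- Decoding of values. -/
inductive DecV : List Conf → Value → Tm W → Prop
  | tm {H : List Conf} {t : Tm Ident} : DecV H (.tm t) (emb t)
  | abs {H : List Conf} {x : Ident} {t : Tm Ident} {e : Env} {ℓ : Loc} {d : Tm W} :
      DecC H (.lam x t) (embEnv e) d → DecV H (.abs x t e ℓ) d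

/-- Decoding of stacks into one-hole contexts (memoization frames are ignored). -/
inductive DecS : List Conf → Stack → Ctx W → Prop
  | nil {H : List Conf} : DecS H [] .hole
  | arg {H : List Conf} {t : Tm Ident} {e : Env} {s : Stack} {C : Ctx W} {d : Tm W} :
      DecS H s C → DecC H t (embEnv e) d →
      DecS H (.arg (t, e) :: s) (C.comp (.appL .hole d))
  | appL {H : List Conf} {t : Tm Ident} {s : Stack} {C : Ctx W} :
      DecS H s C → DecS H (.appL t :: s) (C.comp (.appR (emb t) .hole))
  | lamF {H : List Conf} {x : Ident} {s : Stack} {C : Ctx W} :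
      DecS H s C → DecS H (.lamF x :: s) (C.comp (.lam (Sum.inl x) .hole))
  | cache {H : List Conf} {ℓ : Loc} {s : Stack} {C : Ctx W} :
      DecS H s C → DecS H (.cache ℓ :: s) C

/-- Decoding of configurations: the decoded focus is plugged into the decoded stack. -/
inductive DecK : List Conf → Conf → Tm W → Prop
  | eval {H : List Conf} {t : Tm Ident} {e : Env} {s : Stack} {σ : Store}
      {C : Ctx W} {d : Tm W} :
      DecS H s C → DecC H t (embEnv e) d → DecK H (.eval (t, e) s σ) (C.plug d)
  | cont {H : List Conf} {σ : Store} {v : Value} {s : Stack} {C : Ctx W} {d : Tm W} :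
      DecS H s C → DecV H v d → DecK H (.cont σ v s) (C.plug d)

/-! ### Auxiliary lemmas -/

lemma lookupL_updL {β : Type} (σ : List (ℕ × β)) (x y : ℕ) (b : β) :
    lookupL (updL σ x b) y = (lookupL σ y).map (fun v => if y = x then b else v) := by
  induction σ with
  | nil => rfl
  | cons p l ih =>
    obtain ⟨a, c⟩ := p
    by_cases hax : a = x
    · subst hax
      have hupd : updL ((a, c) :: l) a b = (a, b) :: updL l a b := by simp [updL]
      rw [hupd]
      by_cases hyx : y = a <;> simp [lookupL, hyx, ih]
    · have hupd : updL ((a, c) :: l) x b = (a, c) :: updL l x b := by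
        simp [updL, hax]
      rw [hupd]
      by_cases hya : y = a
      · subst hya
        simp [lookupL, hax]
      · simp [lookupL, hya, ih]

lemma initOf_append_some {H : List Conf} {ℓ : Loc} {p : List Conf × Storable}
    (h : initOf H ℓ = some p) (L : List Conf) : initOf (H ++ L) ℓ = some p := by
  induction H generalizing p with
  | nil => simp [initOf] at h
  | cons k H ih =>
    rw [List.cons_append]
    unfold initOf at h ⊢
    cases hl : lookupL (Conf.store k) ℓ with
    | some sv => simp_all
    | none =>
      simp only [hl] at h ⊢
      cases hi : initOf H ℓ with
      | none => simp [hi] at h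
      | some q => rw [ih hi]; simp_all

lemma initOf_append_none_none {H : List Conf} {ℓ : Loc} {k' : Conf}
    (h : initOf H ℓ = none) (h' : lookupL (Conf.store k') ℓ = none) :
    initOf (H ++ [k']) ℓ = none := by
  induction H with
  | nil => simp [initOf, h']
  | cons k H ih =>
    rw [List.cons_append]
    unfold initOf at h ⊢
    cases hl : lookupL (Conf.store k) ℓ with
    | some sv => simp_all
    | none =>
      simp only [hl] at h ⊢
      cases hi : initOf H ℓ with
      | none => rw [ih hi]; rfl
      | some q => simp [hi] at h

lemma initOf_append_none_some {H : List Conf} {ℓ : Loc} {k' : Conf} {sv : Storable}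
    (h : initOf H ℓ = none) (h' : lookupL (Conf.store k') ℓ = some sv) :
    initOf (H ++ [k']) ℓ = some (H ++ [k'], sv) := by
  induction H with
  | nil => simp [initOf, h']
  | cons k H ih =>
    rw [List.cons_append]
    unfold initOf at h ⊢
    cases hl : lookupL (Conf.store k) ℓ with
    | some sv => simp_all
    | none =>
      simp only [hl] at h ⊢
      cases hi : initOf H ℓ with
      | none => rw [ih hi]; simp
      | some q => simp [hi] at h

lemma initOf_prefix {H H' : List Conf} {ℓ : Loc} {sv : Storable}
    (h : initOf H ℓ = some (H', sv)) : ∃ L, H = H' ++ L := by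
  induction H generalizing H' sv with
  | nil => simp [initOf] at h
  | cons k H ih =>
    unfold initOf at h
    cases hl : lookupL (Conf.store k) ℓ with
    | some sv' =>
      simp only [hl, Option.some.injEq, Prod.mk.injEq] at h
      exact ⟨H, by simp [← h.1]⟩
    | none =>
      simp only [hl] at h
      cases hi : initOf H ℓ with
      | none => simp [hi] at h
      | some q =>
        obtain ⟨q1, q2⟩ := q
        simp only [hi, Option.map_some, Option.some.injEq, Prod.mk.injEq] at h
        obtain ⟨L, hL⟩ := ih hi
        exact ⟨L, by simp [← h.1, hL]⟩

/-- Domain of the store shrinks going backwards along a step. -/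
lemma step_dom {r : ℕ} {k k' : Conf} (h : Step r k k') {ℓ : Loc}
    (hl : lookupL (Conf.store k') ℓ = none) : lookupL (Conf.store k) ℓ = none := by
  cases h <;> simp_all [Conf.store, lookupL, lookupL_updL] <;>
    (try split at hl) <;> simp_all

lemma init_none {k0 : Conf} {H : List Conf} {k : Conf} (h : HistFrom k0 H k) :
    ∀ {ℓ : Loc}, lookupL (Conf.store k) ℓ = none → initOf H ℓ = none := by
  induction h with
  | refl => intro ℓ hl; simp [initOf, hl]
  | @step H k k' r hH hs ih =>
    intro ℓ hl
    exact initOf_append_none_none (ih (step_dom hs hl)) hl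

/-- A location holding a `todo` thunk was initialized with that very thunk. -/
lemma init_todo {k0 : Conf} {H : List Conf} {k : Conf} (h : HistFrom k0 H k) :
    ∀ {ℓ : Loc} {c : Closure}, lookupL (Conf.store k) ℓ = some (.todo c) →
    ∃ H' L, H = H' ++ L ∧ initOf H ℓ = some (H', .todo c) := by
  induction h with
  | refl =>
    intro ℓ c hl
    exact ⟨[k0], [], rfl, by simp [initOf, hl]⟩
  | @step H k k' r hH hs ih =>
    intro ℓ c hl
    have keep : lookupL (Conf.store k) ℓ = some (.todo c) →
        ∃ H' L, H ++ [k'] = H' ++ L ∧ initOf (H ++ [k']) ℓ = some (H', .todo c) := by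
      intro hk
      obtain ⟨H', L, hp, hi⟩ := ih hk
      exact ⟨H', L ++ [k'], by rw [hp, List.append_assoc], initOf_append_some hi _⟩
    cases hs with
    | r1 => exact keep hl
    | r3 => exact keep hl
    | r4done => exact keep hl
    | r4free => exact keep hl
    | r8 => exact keep hl
    | r9 => exact keep hl
    | r10 => exact keep hl
    | r11 => exact keep hl
    | @r2 x t e s σ ℓ0 h0 =>
      simp only [Conf.store, lookupL] at hl
      split at hl
      · simp_all
      · exact keep hl
    | @r5 σ v ℓ0 s =>
      simp only [Conf.store, lookupL_updL] at hl
      cases hσ : lookupL σ ℓ with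
      | none => simp [hσ] at hl
      | some sv =>
        simp only [hσ, Option.map_some, Option.some.injEq] at hl
        split at hl
        · simp at hl
        · exact keep (by simp [Conf.store, hσ, hl])
    | @r6 σ x t t2 e e2 ℓ1 ℓ2 s h0 =>
      simp only [Conf.store, lookupL] at hl
      split at hl
      · rename_i heq
        subst heq
        obtain rfl : (t2, e2) = c := by simpa using hl
        have h1 : initOf H ℓ = none := init_none hH (by simpa [Conf.store] using h0)
        have h2 := initOf_append_none_some
          (k' := Conf.eval (t, (x, ℓ) :: e) s ((ℓ, .todo (t2, e2)) :: σ))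
          (sv := .todo (t2, e2)) h1 (by simp [Conf.store, lookupL])
        exact ⟨_, [], (List.append_nil _).symm, h2⟩
      · exact keep hl
    | @r7 σ x x' x0 t t0 e e0 ℓ1 ℓ2 s hσ hs1 hs2 hℓ2 hx' =>
      simp only [Conf.store, lookupL] at hl
      split at hl
      · simp_all
      · exact keep hl

lemma lookupL_embEnv (e : Env) (x : Ident) :
    lookupL (embEnv e) x = (lookupL e x).map Sum.inl := by
  induction e with
  | nil => rfl
  | cons p l ih =>
    obtain ⟨a, ℓ⟩ := p
    by_cases h : x = a <;> simp_all [embEnv, lookupL]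

/-! ### Monotonicity of the decoding in the history -/

lemma decC_mono {H : List Conf} {t : Tm Ident} {e : DEnv} {d : Tm W}
    (h : DecC H t e d) (L : List Conf) : DecC (H ++ L) t e d := by
  induction h with
  | app _ _ ih1 ih2 => exact .app ih1 ih2
  | lam _ ih => exact .lam ih
  | var_bar hl => exact .var_bar hl
  | var_arg hl hi hc _ => exact .var_arg hl (initOf_append_some hi L) hc
  | var_fresh hl hi => exact .var_fresh hl (initOf_append_some hi L)
  | var_free hl => exact .var_free hl

lemma decV_mono {H : List Conf} {v : Value} {d : Tm W}
    (h : DecV H v d) (L : List Conf) : DecV (H ++ L) v d := by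
  cases h with
  | tm => exact .tm
  | abs hc => exact .abs (decC_mono hc L)

lemma decS_mono {H : List Conf} {s : Stack} {C : Ctx W}
    (h : DecS H s C) (L : List Conf) : DecS (H ++ L) s C := by
  induction h with
  | nil => exact .nil
  | arg _ hc ih => exact .arg ih (decC_mono hc L)
  | appL _ ih => exact .appL ih
  | lamF _ ih => exact .lamF ih
  | cache _ ih => exact .cache ih

/-! ### Determinism of the decoding -/

lemma decC_det : ∀ {H : List Conf} {t : Tm Ident} {e : DEnv} {d : Tm W},
    DecC H t e d → ∀ {d' : Tm W}, DecC H t e d' → d = d' := by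
  intro H t e d h
  induction h with
  | app _ _ ih1 ih2 =>
    intro d' h'
    cases h' with
    | app g1 g2 => rw [ih1 g1, ih2 g2]
  | lam _ ih =>
    intro d' h'
    cases h' with
    | lam g => rw [ih g]
  | var_bar hl =>
    intro d' h'
    cases h' <;> simp_all
  | var_arg hl hi hc ih =>
    intro d' h'
    cases h' with
    | var_bar hl' => simp_all
    | var_free hl' => simp_all
    | var_arg hl' hi' hc' =>
      rw [hl] at hl'
      obtain rfl : _ = _ := by simpa using hl'
      rw [hi] at hi'
      obtain ⟨rfl, rfl, rfl⟩ : _ ∧ _ ∧ _ := by simpa using hi'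
      exact ih hc'
    | var_fresh hl' hi' =>
      rw [hl] at hl'
      obtain rfl : _ = _ := by simpa using hl'
      rw [hi] at hi'
      simp at hi'
  | var_fresh hl hi =>
    intro d' h'
    cases h' with
    | var_bar hl' => simp_all
    | var_free hl' => simp_all
    | var_fresh hl' hi' =>
      rw [hl] at hl'
      obtain rfl : _ = _ := by simpa using hl'
      rw [hi] at hi'
      obtain ⟨rfl, rfl⟩ : _ ∧ _ := by simpa using hi'
      rfl
    | var_arg hl' hi' hc' =>
      rw [hl] at hl'
      obtain rfl : _ = _ := by simpa using hl'
      rw [hi] at hi'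
      simp at hi'
  | var_free hl =>
    intro d' h'
    cases h' <;> simp_all

lemma decV_det {H : List Conf} {v : Value} {d d' : Tm W}
    (h : DecV H v d) (h' : DecV H v d') : d = d' := by
  cases h with
  | tm => cases h'; rfl
  | abs hc =>
    cases h' with
    | abs hc' => exact decC_det hc hc'

lemma decS_det : ∀ {H : List Conf} {s : Stack} {C : Ctx W},
    DecS H s C → ∀ {C' : Ctx W}, DecS H s C' → C = C' := by
  intro H s C h
  induction h with
  | nil => intro C' h'; cases h'; rfl
  | arg _ hc ih =>
    intro C' h'
    cases h' with
    | arg g gc => rw [ih g, decC_det hc gc]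
  | appL _ ih =>
    intro C' h'
    cases h' with
    | appL g => rw [ih g]
  | lamF _ ih =>
    intro C' h'
    cases h' with
    | lamF g => rw [ih g]
  | cache _ ih =>
    intro C' h'
    cases h' with
    | cache g => rw [ih g]

lemma decK_det {H : List Conf} {k : Conf} {d d' : Tm W}
    (h : DecK H k d) (h' : DecK H k d') : d = d' := by
  cases h with
  | eval hs hc =>
    cases h' with
    | eval hs' hc' => rw [decS_det hs hs', decC_det hc hc']
  | cont hs hv =>
    cases h' with
    | cont hs' hv' => rw [decS_det hs hs', decV_det hv hv']

lemma plug_comp {V : Type} (C D : Ctx V) (t : Tm V) :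
    (Ctx.comp C D).plug t = C.plug (D.plug t) := by
  induction C <;> simp_all [Ctx.comp, Ctx.plug]

/-- Overhead transitions preserve the decoding: if a reachable configuration `k`
steps to `k'` by one of transitions (1), (2), (3), (5), (9), (10), (11), then
the decoded terms are equal. -/
theorem overhead_transitions {t0 : Tm Ident} {H : List Conf} {k k' : Conf} {r : ℕ}
    (h : HistFrom (Conf.init t0) H k)
    (hr : r = 1 ∨ r = 2 ∨ r = 3 ∨ r = 5 ∨ r = 9 ∨ r = 10 ∨ r = 11)
    (hstep : Step r k k')
    {d d' : Tm W} (hd : DecK H k d) (hd' : DecK (H ++ [k']) k' d') :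
    d = d' := by
  cases hstep with
  | r4done he hσ => omega
  | r4free he => omega
  | r6 h0 => omega
  | r7 hσ hs1 hs2 hℓ2 hx' => omega
  | r8 hσ hs1 hs2 => omega
  | @r1 t1 t2 e s σ =>
    cases hd with
    | @eval _ _ _ _ C _ hs hc =>
      cases hc with
      | app h1 h2 =>
        rename_i d1 d2
        have hd'' : DecK (H ++ [Conf.eval (t1, e) (.arg (t2, e) :: s) σ])
            (Conf.eval (t1, e) (.arg (t2, e) :: s) σ)
            ((C.comp (.appL .hole d2)).plug d1) :=
          DecK.eval (DecS.arg (decS_mono hs _) (decC_mono h2 _)) (decC_mono h1 _)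
        have e1 : (C.comp (.appL .hole d2)).plug d1 = C.plug (.app d1 d2) := by
          rw [plug_comp]; rfl
        rw [← e1]
        exact decK_det hd'' hd'
  | @r2 x t e s σ ℓ h0 =>
    cases hd with
    | eval hs hc =>
      exact decK_det (DecK.cont (decS_mono hs _) (DecV.abs (decC_mono hc _))) hd'
  | @r3 x e e2 s σ ℓ t he hσ =>
    cases hd with
    | eval hs hc =>
      rename_i C d0
      cases hc with
      | var_bar hl => rw [lookupL_embEnv, he] at hl; simp at hl
      | var_free hl => rw [lookupL_embEnv, he] at hl; simp at hl
      | @var_fresh _ H1 _ x' _ ℓ' hl hi =>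
        rw [lookupL_embEnv, he] at hl
        obtain rfl : ℓ = ℓ' := by simpa using hl
        obtain ⟨H2, L, hp, hi2⟩ := init_todo h (ℓ := ℓ) (c := (t, e2)) hσ
        rw [hi] at hi2
        simp at hi2
      | @var_arg _ H1 _ _ ℓ' t2' e2' _ hl hi hc2 =>
        rw [lookupL_embEnv, he] at hl
        obtain rfl : ℓ = ℓ' := by simpa using hl
        obtain ⟨H2, L, hp, hi2⟩ := init_todo h (ℓ := ℓ) (c := (t, e2)) hσ
        rw [hi] at hi2
        obtain ⟨hH12, ht, he2⟩ : H1 = H2 ∧ t2' = t ∧ e2' = e2 := by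
          simpa using hi2
        rw [ht, he2, hH12] at hc2
        have hc3 : DecC (H ++ [Conf.eval (t, e2) (.cache ℓ :: s) σ]) t (embEnv e2) d0 := by
          rw [hp, List.append_assoc]; exact decC_mono hc2 _
        exact decK_det (DecK.eval (DecS.cache (decS_mono hs _)) hc3) hd'
  | @r5 σ v ℓ s =>
    cases hd with
    | cont hs hv =>
      cases hs with
      | cache hs' =>
        exact decK_det (DecK.cont (decS_mono hs' _) (decV_mono hv _)) hd'
  | @r9 σ t t2 e2 s =>
    cases hd with
    | cont hs hv =>
      cases hs with
      | @arg _ _ _ C0 d2 hs' hc2 =>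
        cases hv with
        | tm =>
          have hd'' : DecK (H ++ [Conf.eval (t2, e2) (.appL t :: s) σ])
              (Conf.eval (t2, e2) (.appL t :: s) σ)
              ((C0.comp (.appR (emb t) .hole)).plug d2) :=
            DecK.eval (DecS.appL (decS_mono hs' _)) (decC_mono hc2 _)
          have e1 : (C0.comp (.appL .hole d2)).plug (emb t) = C0.plug (.app (emb t) d2) := by
            rw [plug_comp]; rfl
          have e2' : (C0.comp (.appR (emb t) .hole)).plug d2 = C0.plug (.app (emb t) d2) := by
            rw [plug_comp]; rfl
          rw [e1, ← e2']
          exact decK_det hd'' hd'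
  | @r10 σ t1 t2 s =>
    cases hd with
    | cont hs hv =>
      cases hs with
      | @appL _ _ C0 hs' =>
        cases hv with
        | tm =>
          have hd'' : DecK (H ++ [Conf.cont σ (.tm (.app t1 t2)) s])
              (Conf.cont σ (.tm (.app t1 t2)) s) (C0.plug (emb (.app t1 t2))) :=
            DecK.cont (decS_mono hs' _) DecV.tm
          have e1 : (C0.comp (.appR (emb t1) .hole)).plug (emb t2)
              = C0.plug (emb (.app t1 t2)) := by
            rw [plug_comp]; rfl
          rw [e1]
          exact decK_det hd'' hd'
  | @r11 σ t x s =>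
    cases hd with
    | cont hs hv =>
      cases hs with
      | @lamF _ _ C0 hs' =>
        cases hv with
        | tm =>
          have hd'' : DecK (H ++ [Conf.cont σ (.tm (.lam x t)) s])
              (Conf.cont σ (.tm (.lam x t)) s) (C0.plug (emb (.lam x t))) :=
            DecK.cont (decS_mono hs' _) DecV.tm
          have e1 : (C0.comp (.lam (Sum.inl x) .hole)).plug (emb t)
              = C0.plug (emb (.lam x t)) := by
            rw [plug_comp]; rfl
          rw [e1]
          exact decK_det hd'' hd'

end RKNL
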